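/- arXiv:1406.4424 — 6 statements merged into one kernel-verified Lean document; each statement's English description precedes it below -/
import Mathlib

section
/- Let T>0 and 0<ε≤M be fixed constants, let f be twice continuously differentiable on [-1/ε,T], let g be continuous on [-1/ε,T] with ε ≤ g(t) ≤ M for all t ∈ [-1/ε,T], and let x ∈ C¹([0,T]) solve dx/dt = f(t) - g(t)x(t) on (0,T) with x(0)=x⁰. Define the delayed quasi-steady state approximation x̃(t) = f(t-τ(t))/g(t-τ(t)) with delay τ(t) = 1/g(t). Then for all t ∈ [0,T], |x(t) - x̃(t)| ≤ 2(1/ε - 1/M)·max_{s∈[-1/ε,t]}|f(s)| + (1/ε³)·max_{s∈[-1/ε,t]}|f''(s)| + Q(t), where Q(t) = [|x⁰| + (1/ε)·max_{[-1/ε,t]}|f| + (t/ε)·max_{[-1/ε,t]}|f'| + (1/(2ε))·(1/ε² + t²)·max_{[-1/ε,t]}|f''|]·exp(-εt). -/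
/-!
Variation of constants gives `x t = e^{-∫₀ᵗ g} x⁰ + ∫₀ᵗ e^{-∫ₛᵗ g} f(s) ds`. Freezing the
coefficient at `γ = g t` costs at most `max |f| · (1/ε - 1/M)`, since both kernels lie between
`e^{-M(t-s)}` and `e^{-ε(t-s)}`. Against the frozen kernel, expand `f` to first order at the delayed
time `a = t - 1/γ`: because `1/γ` is the mean lag `t - s` under `γ e^{-γ(t-s)}`, the affine part
integrates to `f(a)/γ` up to a term of order `e^{-γt}`, and the Taylor remainder contributes at most
`max |f''| · ∫₀^∞ e^{-γu} (u - 1/γ)² du = max |f''| / γ³`. Finally `f(a)/γ` differs from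
`x̃(t) = f(a)/g(a)` by at most `max |f| · (1/ε - 1/M)`.
-/

open Set Real intervalIntegral MeasureTheory

theorem abs_sub_sub_mul_sub_le_mul_sq {f f' f'' : ℝ → ℝ} {S : Set ℝ} {C a s : ℝ}
    (hS : Convex ℝ S) (hf' : ∀ u ∈ S, HasDerivAt f (f' u) u)
    (hf'' : ∀ u ∈ S, HasDerivAt f' (f'' u) u) (hC : ∀ u ∈ S, |f'' u| ≤ C)
    (ha : a ∈ S) (hs : s ∈ S) :
    |f s - f a - f' a * (s - a)| ≤ C * (s - a) ^ 2 := by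
  have hC0 : 0 ≤ C := (abs_nonneg _).trans (hC a ha)
  have hlip : ∀ u ∈ S, |f' u - f' a| ≤ C * |u - a| := fun u hu =>
    hS.norm_image_sub_le_of_norm_hasDerivWithin_le (fun v hv => (hf'' v hv).hasDerivWithinAt)
      hC ha hu
  have hseg : uIcc a s ⊆ S := hS.ordConnected.uIcc_subset ha hs
  have key := (convex_uIcc a s).norm_image_sub_le_of_norm_hasDerivWithin_le
    (f := fun u => f u - f' a * u) (f' := fun u => f' u - f' a) (C := C * |s - a|)
    (fun u hu => (((hf' u (hseg hu)).sub ((hasDerivAt_id u).const_mul (f' a))).congr_deriv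
      (by simp)).hasDerivWithinAt)
    (fun u hu => (hlip u (hseg hu)).trans
      (mul_le_mul_of_nonneg_left (abs_sub_left_of_mem_uIcc hu) hC0))
    left_mem_uIcc right_mem_uIcc
  simp only [Real.norm_eq_abs] at key
  calc |f s - f a - f' a * (s - a)| = |f s - f' a * s - (f a - f' a * a)| := by ring_nf
    _ ≤ C * |s - a| * |s - a| := key
    _ = C * (s - a) ^ 2 := by rw [mul_assoc, ← sq, sq_abs]

theorem continuousOn_integral_left {g : ℝ → ℝ} {a b : ℝ} (hab : a ≤ b)
    (hg : ContinuousOn g (Icc a b)) : ContinuousOn (fun s => ∫ u in s..b, g u) (Icc a b) := by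
  have := continuousOn_primitive_interval_left (f := g) (a := a) (b := b) (μ := volume)
    (by rw [uIcc_of_le hab]; exact hg.integrableOn_Icc)
  rwa [uIcc_of_le hab] at this

theorem eq_exp_mul_add_integral_of_hasDerivAt {f g x : ℝ → ℝ} {t : ℝ} (ht : 0 ≤ t)
    (hf : ContinuousOn f (Icc 0 t)) (hg : ContinuousOn g (Icc 0 t))
    (hx : ContinuousOn x (Icc 0 t)) (hode : ∀ s ∈ Ioo 0 t, HasDerivAt x (f s - g s * x s) s) :
    x t = exp (-∫ u in 0..t, g u) * x 0 + ∫ s in 0..t, exp (-∫ u in s..t, g u) * f s := by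
  have hGderiv (s : ℝ) (hs : s ∈ Ioo 0 t) :
      HasDerivAt (fun s => ∫ u in s..t, g u) (-g s) s :=
    integral_hasDerivAt_left
      ((hg.mono (Icc_subset_Icc hs.1.le le_rfl)).intervalIntegrable_of_Icc hs.2.le)
      ((hg.mono Ioo_subset_Icc_self).stronglyMeasurableAtFilter isOpen_Ioo s hs)
      ((hg.mono Ioo_subset_Icc_self).continuousAt (isOpen_Ioo.mem_nhds hs))
  have hK : ContinuousOn (fun s => exp (-∫ u in s..t, g u)) (Icc 0 t) :=
    (continuousOn_integral_left ht hg).neg.rexp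
  have hFTC := integral_eq_sub_of_hasDerivAt_of_le (f := fun s => exp (-∫ u in s..t, g u) * x s)
    (f' := fun s => exp (-∫ u in s..t, g u) * f s)
    ht (hK.mul hx) (fun s hs => ((hGderiv s hs).neg.exp.mul (hode s hs)).congr_deriv
      (by simp only [Pi.neg_apply]; ring))
    ((hK.mul hf).intervalIntegrable_of_Icc ht)
  simp only [integral_same, neg_zero, exp_zero, one_mul] at hFTC
  linarith

theorem integral_mem_Icc_of_mem_Icc {g : ℝ → ℝ} {ε M s t : ℝ} (hst : s ≤ t)
    (hg : IntervalIntegrable g volume s t) (hgεM : ∀ u ∈ Icc s t, g u ∈ Icc ε M) :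
    ∫ u in s..t, g u ∈ Icc (ε * (t - s)) (M * (t - s)) := by
  constructor
  · simpa [mul_comm] using
      integral_mono_on hst intervalIntegrable_const hg fun u hu => (hgεM u hu).1
  · simpa [mul_comm] using
      integral_mono_on hst hg intervalIntegrable_const fun u hu => (hgεM u hu).2

theorem abs_exp_neg_sub_exp_neg_le {A B lo hi : ℝ} (hA : A ∈ Icc lo hi) (hB : B ∈ Icc lo hi) :
    |exp (-A) - exp (-B)| ≤ exp (-lo) - exp (-hi) := by
  have hA₁ := exp_le_exp.2 (neg_le_neg hA.1)
  have hA₂ := exp_le_exp.2 (neg_le_neg hA.2)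
  have hB₁ := exp_le_exp.2 (neg_le_neg hB.1)
  have hB₂ := exp_le_exp.2 (neg_le_neg hB.2)
  rw [abs_sub_le_iff]
  constructor <;> linarith

theorem hasDerivAt_exp_neg_mul_sub (c t s : ℝ) :
    HasDerivAt (fun s => exp (-(c * (t - s)))) (c * exp (-(c * (t - s)))) s := by
  simpa [mul_comm] using (((hasDerivAt_id s).const_sub t).const_mul c).neg.exp

theorem integral_exp_neg_mul_sub {c : ℝ} (hc : c ≠ 0) (t : ℝ) :
    ∫ s in 0..t, exp (-(c * (t - s))) = (1 - exp (-(c * t))) / c := by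
  rw [integral_eq_sub_of_hasDerivAt (f := fun s => exp (-(c * (t - s))) / c)
    (fun s _ => ((hasDerivAt_exp_neg_mul_sub c t s).div_const c).congr_deriv (by field_simp))
    ((by fun_prop : Continuous _).intervalIntegrable _ _)]
  simp [sub_div]

theorem integral_exp_neg_mul_sub_sub_le {ε M : ℝ} (hε : 0 < ε) (hεM : ε ≤ M) {t : ℝ}
    (ht : 0 ≤ t) :
    ∫ s in 0..t, (exp (-(ε * (t - s))) - exp (-(M * (t - s)))) ≤ 1 / ε - 1 / M := by
  have hM : 0 < M := hε.trans_le hεM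
  rw [intervalIntegral.integral_sub ((by fun_prop : Continuous _).intervalIntegrable _ _)
    ((by fun_prop : Continuous _).intervalIntegrable _ _), integral_exp_neg_mul_sub hε.ne',
    integral_exp_neg_mul_sub hM.ne']
  have hexp : exp (-(M * t)) ≤ exp (-(ε * t)) := by gcongr
  have : exp (-(M * t)) / M ≤ exp (-(ε * t)) / ε := by gcongr
  rw [sub_div, sub_div]
  linarith

theorem abs_integral_exp_neg_integral_mul_sub_le {f g : ℝ → ℝ} {t ε M γ F : ℝ} (ht : 0 ≤ t)
    (hε : 0 < ε) (hf : ContinuousOn f (Icc 0 t)) (hg : ContinuousOn g (Icc 0 t))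
    (hgεM : ∀ s ∈ Icc 0 t, g s ∈ Icc ε M) (hγ : γ ∈ Icc ε M) (hF : ∀ s ∈ Icc 0 t, |f s| ≤ F) :
    |(∫ s in 0..t, exp (-∫ u in s..t, g u) * f s) - ∫ s in 0..t, exp (-(γ * (t - s))) * f s|
      ≤ F * (1 / ε - 1 / M) := by
  have hF0 : 0 ≤ F := (abs_nonneg _).trans (hF t (right_mem_Icc.2 ht))
  have hK : ContinuousOn (fun s => exp (-∫ u in s..t, g u)) (Icc 0 t) :=
    (continuousOn_integral_left ht hg).neg.rexp
  have hkernel : ∀ s ∈ Icc 0 t, |exp (-∫ u in s..t, g u) - exp (-(γ * (t - s)))|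
      ≤ exp (-(ε * (t - s))) - exp (-(M * (t - s))) := by
    intro s hs
    have hts : 0 ≤ t - s := sub_nonneg.2 hs.2
    refine abs_exp_neg_sub_exp_neg_le (integral_mem_Icc_of_mem_Icc hs.2
      ((hg.mono (Icc_subset_Icc hs.1 le_rfl)).intervalIntegrable_of_Icc hs.2)
      fun u hu => hgεM u ⟨hs.1.trans hu.1, hu.2⟩) ⟨?_, ?_⟩
    · exact mul_le_mul_of_nonneg_right hγ.1 hts
    · exact mul_le_mul_of_nonneg_right hγ.2 hts
  have hI : IntervalIntegrable (fun s => exp (-∫ u in s..t, g u) * f s) volume 0 t :=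
    (hK.mul hf).intervalIntegrable_of_Icc ht
  have hJ : IntervalIntegrable (fun s => exp (-(γ * (t - s))) * f s) volume 0 t :=
    ((by fun_prop : Continuous fun s => exp (-(γ * (t - s)))).continuousOn.mul
      hf).intervalIntegrable_of_Icc ht
  rw [← intervalIntegral.integral_sub hI hJ]
  calc _ ≤ ∫ s in 0..t, F * (exp (-(ε * (t - s))) - exp (-(M * (t - s)))) := by
        rw [← Real.norm_eq_abs]
        refine norm_integral_le_of_norm_le ht (ae_of_all volume fun s hs => ?_)
          ((by fun_prop : Continuous fun s =>
            F * (exp (-(ε * (t - s))) - exp (-(M * (t - s))))).intervalIntegrable _ _)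
        rw [Real.norm_eq_abs, ← sub_mul, abs_mul, mul_comm]
        exact mul_le_mul (hF s (Ioc_subset_Icc_self hs)) (hkernel s (Ioc_subset_Icc_self hs))
          (abs_nonneg _) hF0
    _ ≤ F * (1 / ε - 1 / M) := by
        rw [intervalIntegral.integral_const_mul]
        exact mul_le_mul_of_nonneg_left
          (integral_exp_neg_mul_sub_sub_le hε (hγ.1.trans hγ.2) ht) hF0

theorem integral_exp_neg_mul_mul_affine {γ : ℝ} (hγ : γ ≠ 0) (p q t : ℝ) :
    ∫ s in 0..t, exp (-(γ * (t - s))) * (p + q * (s - (t - 1 / γ)))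
      = (p - exp (-(γ * t)) * (p - q * t)) / γ := by
  have hlin (s : ℝ) : HasDerivAt (fun s => p + q * (s - t)) q s := by
    simpa using (((hasDerivAt_id s).sub_const t).const_mul q).const_add p
  rw [integral_eq_sub_of_hasDerivAt (f := fun s => exp (-(γ * (t - s))) * (p + q * (s - t)) / γ)
    (fun s _ => (((hasDerivAt_exp_neg_mul_sub γ t s).mul (hlin s)).div_const γ).congr_deriv
      (by field_simp; ring))
    ((by fun_prop : Continuous _).intervalIntegrable _ _)]
  simp only [sub_self, sub_zero, mul_zero, neg_zero, exp_zero, add_zero, one_mul, zero_sub]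
  ring

theorem integral_exp_neg_mul_mul_sq_le {γ : ℝ} (hγ : 0 < γ) (t : ℝ) :
    ∫ s in 0..t, exp (-(γ * (t - s))) * (s - (t - 1 / γ)) ^ 2 ≤ 1 / γ ^ 3 := by
  have hquad (s : ℝ) : HasDerivAt (fun s => (s - t) ^ 2 + 1 / γ ^ 2) (2 * (s - t)) s := by
    simpa using (((hasDerivAt_id s).sub_const t).fun_pow 2).add_const (1 / γ ^ 2)
  rw [integral_eq_sub_of_hasDerivAt
    (f := fun s => exp (-(γ * (t - s))) * ((s - t) ^ 2 + 1 / γ ^ 2) / γ)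
    (fun s _ => (((hasDerivAt_exp_neg_mul_sub γ t s).mul (hquad s)).div_const γ).congr_deriv
      (by field_simp; ring))
    ((by fun_prop : Continuous _).intervalIntegrable _ _)]
  have hend : exp (-(γ * (t - t))) * ((t - t) ^ 2 + 1 / γ ^ 2) / γ = 1 / γ ^ 3 := by
    simp only [sub_self, mul_zero, neg_zero, exp_zero, one_mul]
    field_simp
    ring
  have hstart : 0 ≤ exp (-(γ * (t - 0))) * ((0 - t) ^ 2 + 1 / γ ^ 2) / γ := by positivity
  linarith

theorem abs_integral_exp_neg_mul_mul_sub_le {f f' f'' : ℝ → ℝ} {S : Set ℝ} {γ t C : ℝ}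
    (hγ : 0 < γ) (ht : 0 ≤ t) (hS : Convex ℝ S) (h0S : 0 ∈ S) (hdelay : t - 1 / γ ∈ S)
    (htS : t ∈ S) (hf' : ∀ u ∈ S, HasDerivAt f (f' u) u)
    (hf'' : ∀ u ∈ S, HasDerivAt f' (f'' u) u) (hC : ∀ u ∈ S, |f'' u| ≤ C) :
    |(∫ s in 0..t, exp (-(γ * (t - s))) * f s) - f (t - 1 / γ) / γ|
      ≤ exp (-(γ * t)) * (|f (t - 1 / γ)| + t * |f' (t - 1 / γ)|) / γ + C / γ ^ 3 := by
  set a := t - 1 / γ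
  have hC0 : 0 ≤ C := (abs_nonneg _).trans (hC a hdelay)
  have hIcc : Icc 0 t ⊆ S := hS.ordConnected.out h0S htS
  have hf : ContinuousOn f S := fun u hu => (hf' u hu).continuousAt.continuousWithinAt
  have hE : Continuous fun s => exp (-(γ * (t - s))) := by fun_prop
  have hsplit : (∫ s in 0..t, exp (-(γ * (t - s))) * f s)
      = (∫ s in 0..t, exp (-(γ * (t - s))) * (f a + f' a * (s - a)))
        + ∫ s in 0..t, exp (-(γ * (t - s))) * (f s - f a - f' a * (s - a)) := by
    have hlin : IntervalIntegrable (fun s => exp (-(γ * (t - s))) * (f a + f' a * (s - a)))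
        volume 0 t := (by fun_prop : Continuous _).intervalIntegrable _ _
    have hrem : IntervalIntegrable (fun s => exp (-(γ * (t - s))) * (f s - f a - f' a * (s - a)))
        volume 0 t :=
      (hE.continuousOn.mul (((hf.mono hIcc).sub continuousOn_const).sub
        (by fun_prop))).intervalIntegrable_of_Icc ht
    rw [← intervalIntegral.integral_add hlin hrem]
    congr 1 with s
    ring
  have hremainder : |∫ s in 0..t, exp (-(γ * (t - s))) * (f s - f a - f' a * (s - a))|
      ≤ C / γ ^ 3 := by
    rw [← Real.norm_eq_abs]
    calc _ ≤ ∫ s in 0..t, C * (exp (-(γ * (t - s))) * (s - a) ^ 2) := by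
          refine norm_integral_le_of_norm_le ht (ae_of_all volume fun s hs => ?_)
            ((by fun_prop : Continuous fun s =>
              C * (exp (-(γ * (t - s))) * (s - a) ^ 2)).intervalIntegrable _ _)
          rw [Real.norm_eq_abs, abs_mul, abs_of_pos (exp_pos _), mul_left_comm]
          exact mul_le_mul_of_nonneg_left (abs_sub_sub_mul_sub_le_mul_sq hS hf' hf'' hC
            hdelay (hIcc (Ioc_subset_Icc_self hs))) (exp_pos _).le
      _ ≤ C / γ ^ 3 := by
          rw [intervalIntegral.integral_const_mul, div_eq_mul_one_div]
          exact mul_le_mul_of_nonneg_left (integral_exp_neg_mul_mul_sq_le hγ t) hC0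
  have hdecay : |exp (-(γ * t)) * (f a - f' a * t) / γ|
      ≤ exp (-(γ * t)) * (|f a| + t * |f' a|) / γ := by
    rw [abs_div, abs_mul, abs_of_pos (exp_pos _), abs_of_pos hγ]
    gcongr
    exact (abs_sub _ _).trans_eq (by rw [abs_mul, abs_of_nonneg ht, mul_comm])
  rw [hsplit, integral_exp_neg_mul_mul_affine hγ.ne']
  calc _ = |(∫ s in 0..t, exp (-(γ * (t - s))) * (f s - f a - f' a * (s - a)))
        - exp (-(γ * t)) * (f a - f' a * t) / γ| := by congr 1; ring
    _ ≤ _ := (abs_sub _ _).trans (by linarith)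

theorem abs_div_sub_div_le {p u v ε M F : ℝ} (hε : 0 < ε) (hu : u ∈ Icc ε M)
    (hv : v ∈ Icc ε M) (hp : |p| ≤ F) : |p / u - p / v| ≤ F * (1 / ε - 1 / M) := by
  have hu0 : 0 < u := hε.trans_le hu.1
  have hv0 : 0 < v := hε.trans_le hv.1
  rw [div_eq_mul_one_div p u, div_eq_mul_one_div p v, ← mul_sub, abs_mul]
  refine mul_le_mul hp ?_ (abs_nonneg _) ((abs_nonneg _).trans hp)
  have := one_div_le_one_div_of_le hε hu.1
  have := one_div_le_one_div_of_le hε hv.1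
  have := one_div_le_one_div_of_le hu0 hu.2
  have := one_div_le_one_div_of_le hv0 hv.2
  rw [abs_sub_le_iff]
  constructor <;> linarith

theorem abs_le_sSup_image_abs {h : ℝ → ℝ} {a b s : ℝ} (hh : ContinuousOn h (Icc a b))
    (hs : s ∈ Icc a b) : |h s| ≤ sSup ((fun s => |h s|) '' Icc a b) :=
  le_csSup (isCompact_Icc.image_of_continuousOn hh.abs).bddAbove (mem_image_of_mem _ hs)

theorem abs_sub_delayed_qssa_le {f f' f'' g x : ℝ → ℝ} {t ε M F₀ F₁ F₂ : ℝ} (ht : 0 ≤ t)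
    (hε : 0 < ε) (hf' : ∀ s ∈ Icc (-(1 / ε)) t, HasDerivAt f (f' s) s)
    (hf'' : ∀ s ∈ Icc (-(1 / ε)) t, HasDerivAt f' (f'' s) s)
    (hg : ContinuousOn g (Icc (-(1 / ε)) t)) (hgεM : ∀ s ∈ Icc (-(1 / ε)) t, g s ∈ Icc ε M)
    (hx : ContinuousOn x (Icc 0 t)) (hode : ∀ s ∈ Ioo 0 t, HasDerivAt x (f s - g s * x s) s)
    (hF₀ : ∀ s ∈ Icc (-(1 / ε)) t, |f s| ≤ F₀) (hF₁ : ∀ s ∈ Icc (-(1 / ε)) t, |f' s| ≤ F₁)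
    (hF₂ : ∀ s ∈ Icc (-(1 / ε)) t, |f'' s| ≤ F₂) :
    |x t - f (t - 1 / g t) / g (t - 1 / g t)|
      ≤ 2 * (1 / ε - 1 / M) * F₀ + 1 / ε ^ 3 * F₂
        + (|x 0| + 1 / ε * F₀ + t / ε * F₁) * exp (-ε * t) := by
  set γ := g t
  set a := t - 1 / γ
  have htS : t ∈ Icc (-(1 / ε)) t := ⟨by linarith [one_div_pos.2 hε], le_rfl⟩
  have hIcc : Icc 0 t ⊆ Icc (-(1 / ε)) t := Icc_subset_Icc_left (by linarith [one_div_pos.2 hε])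
  have hγ : γ ∈ Icc ε M := hgεM t htS
  have hγ0 : 0 < γ := hε.trans_le hγ.1
  have haS : a ∈ Icc (-(1 / ε)) t :=
    ⟨by linarith [one_div_le_one_div_of_le hε hγ.1], by linarith [one_div_pos.2 hγ0]⟩
  have hf : ContinuousOn f (Icc (-(1 / ε)) t) :=
    fun s hs => (hf' s hs).continuousAt.continuousWithinAt
  set I := ∫ s in 0..t, exp (-∫ u in s..t, g u) * f s
  set J := ∫ s in 0..t, exp (-(γ * (t - s))) * f s
  have hsol := eq_exp_mul_add_integral_of_hasDerivAt ht (hf.mono hIcc) (hg.mono hIcc) hx hode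
  have hkernel := abs_integral_exp_neg_integral_mul_sub_le ht hε (hf.mono hIcc) (hg.mono hIcc)
    (fun s hs => hgεM s (hIcc hs)) hγ (fun s hs => hF₀ s (hIcc hs))
  have hfrozen := abs_integral_exp_neg_mul_mul_sub_le hγ0 ht (convex_Icc _ _) (hIcc ⟨le_rfl, ht⟩)
    haS htS hf' hf'' hF₂
  have hquot := abs_div_sub_div_le hε hγ (hgεM a haS) (hF₀ a haS)
  have hinit : exp (-∫ u in 0..t, g u) ≤ exp (-ε * t) := by
    have := (integral_mem_Icc_of_mem_Icc ht ((hg.mono hIcc).intervalIntegrable_of_Icc ht)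
      fun s hs => hgεM s (hIcc hs)).1
    gcongr
    linarith
  have hdecay : exp (-(γ * t)) * (|f a| + t * |f' a|) / γ + F₂ / γ ^ 3
      ≤ exp (-ε * t) * (F₀ + t * F₁) / ε + F₂ / ε ^ 3 := by
    have hF₂0 : 0 ≤ F₂ := (abs_nonneg _).trans (hF₂ t htS)
    have hεγ : ε ≤ γ := hγ.1
    have hfa : |f a| ≤ F₀ := hF₀ a haS
    have hf'a : |f' a| ≤ F₁ := hF₁ a haS
    have hexp : -(γ * t) ≤ -ε * t := by nlinarith
    gcongr
    exact mul_nonneg (exp_pos _).le (by nlinarith [abs_nonneg (f a), abs_nonneg (f' a)])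
  calc |x t - f a / g a|
        = |exp (-∫ u in 0..t, g u) * x 0 + ((I - J) + ((J - f a / γ) + (f a / γ - f a / g a)))| :=
          by rw [hsol]; congr 1; ring
    _ ≤ _ := (abs_add_le _ _).trans (add_le_add le_rfl ((abs_add_le _ _).trans
        (add_le_add le_rfl (abs_add_le _ _))))
    _ ≤ exp (-ε * t) * |x 0| + (F₀ * (1 / ε - 1 / M) + ((exp (-ε * t) * (F₀ + t * F₁) / ε
        + F₂ / ε ^ 3) + F₀ * (1 / ε - 1 / M))) := by
        rw [abs_mul, abs_of_pos (exp_pos _)]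
        exact add_le_add (by gcongr) (add_le_add hkernel (add_le_add (hfrozen.trans hdecay) hquot))
    _ = _ := by ring

theorem dqssa_error_estimate_general
    (T ε M x0 : ℝ) (hε : 0 < ε)
    (f f' f'' g x : ℝ → ℝ)
    (hf' : ∀ s ∈ Set.Icc (-(1/ε)) T, HasDerivAt f (f' s) s)
    (hf'' : ∀ s ∈ Set.Icc (-(1/ε)) T, HasDerivAt f' (f'' s) s)
    (hf''c : ContinuousOn f'' (Set.Icc (-(1/ε)) T))
    (hg : ContinuousOn g (Set.Icc (-(1/ε)) T))
    (hgl : ∀ s ∈ Set.Icc (-(1/ε)) T, ε ≤ g s)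
    (hgu : ∀ s ∈ Set.Icc (-(1/ε)) T, g s ≤ M)
    (hxc : ContinuousOn x (Set.Icc 0 T))
    (hode : ∀ s ∈ Set.Ioo (0:ℝ) T, HasDerivAt x (f s - g s * x s) s)
    (hx0 : x 0 = x0) :
    ∀ t ∈ Set.Icc (0:ℝ) T,
      |x t - f (t - 1 / g t) / g (t - 1 / g t)|
        ≤ 2 * (1 / ε - 1 / M) * sSup ((fun s => |f s|) '' Set.Icc (-(1/ε)) t)
          + (1 / ε ^ 3) * sSup ((fun s => |f'' s|) '' Set.Icc (-(1/ε)) t)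
          + (|x0|
              + (1 / ε) * sSup ((fun s => |f s|) '' Set.Icc (-(1/ε)) t)
              + (t / ε) * sSup ((fun s => |f' s|) '' Set.Icc (-(1/ε)) t)
              + (1 / (2 * ε)) * (1 / ε ^ 2 + t ^ 2)
                  * sSup ((fun s => |f'' s|) '' Set.Icc (-(1/ε)) t))
            * Real.exp (-ε * t) := by
  intro t ht
  have hsub : Icc (-(1 / ε)) t ⊆ Icc (-(1 / ε)) T := Icc_subset_Icc_right ht.2
  have hf : ContinuousOn f (Icc (-(1 / ε)) T) :=
    fun s hs => (hf' s hs).continuousAt.continuousWithinAt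
  have hf'c : ContinuousOn f' (Icc (-(1 / ε)) T) :=
    fun s hs => (hf'' s hs).continuousAt.continuousWithinAt
  set F₀ := sSup ((fun s => |f s|) '' Icc (-(1 / ε)) t)
  set F₁ := sSup ((fun s => |f' s|) '' Icc (-(1 / ε)) t)
  set F₂ := sSup ((fun s => |f'' s|) '' Icc (-(1 / ε)) t)
  have hF₂ (s : ℝ) (hs : s ∈ Icc (-(1 / ε)) t) : |f'' s| ≤ F₂ :=
    abs_le_sSup_image_abs (hf''c.mono hsub) hs
  have hF₂0 : 0 ≤ F₂ :=
    (abs_nonneg _).trans (hF₂ t ⟨by linarith [one_div_pos.2 hε, ht.1], le_rfl⟩)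
  have hmain := abs_sub_delayed_qssa_le ht.1 hε (fun s hs => hf' s (hsub hs))
    (fun s hs => hf'' s (hsub hs)) (hg.mono hsub) (fun s hs => ⟨hgl s (hsub hs), hgu s (hsub hs)⟩)
    (hxc.mono (Icc_subset_Icc_right ht.2)) (fun s hs => hode s ⟨hs.1, hs.2.trans_le ht.2⟩)
    (fun s hs => abs_le_sSup_image_abs (hf.mono hsub) hs)
    (fun s hs => abs_le_sSup_image_abs (hf'c.mono hsub) hs) hF₂
  rw [hx0] at hmain
  refine hmain.trans (add_le_add_right (mul_le_mul_of_nonneg_right ?_ (exp_pos _).le) _)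
  exact le_add_of_nonneg_right (mul_nonneg (by positivity) hF₂0)

/-- Error estimate for the delayed quasi-steady state approximation (D-QSSA).
Let `0 < ε ≤ M`, `f ∈ C²([-1/ε,T])`, `g` continuous with `ε ≤ g ≤ M` on `[-1/ε,T]`,
and let `x ∈ C¹([0,T])` solve `dx/dt = f(t) - g(t)x(t)` on `(0,T)` with `x(0) = x⁰`.
With `x̃(t) = f(t-τ(t))/g(t-τ(t))`, `τ(t) = 1/g(t)`, for all `t ∈ [0,T]`:
`|x(t) - x̃(t)| ≤ 2(1/ε - 1/M)·max|f| + (1/ε³)·max|f''| + Q(t)`, where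
`Q(t) = [|x⁰| + (1/ε)·max|f| + (t/ε)·max|f'| + (1/(2ε))·(1/ε² + t²)·max|f''|]·exp(-εt)`
and all maxima are taken over `[-1/ε,t]`. -/
theorem dqssa_error_estimate
    (T ε M x0 : ℝ) (hT : 0 < T) (hε : 0 < ε) (hεM : ε ≤ M)
    (f f' f'' g x : ℝ → ℝ)
    (hf' : ∀ s ∈ Set.Icc (-(1/ε)) T, HasDerivAt f (f' s) s)
    (hf'' : ∀ s ∈ Set.Icc (-(1/ε)) T, HasDerivAt f' (f'' s) s)
    (hf''c : ContinuousOn f'' (Set.Icc (-(1/ε)) T))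
    (hg : ContinuousOn g (Set.Icc (-(1/ε)) T))
    (hgl : ∀ s ∈ Set.Icc (-(1/ε)) T, ε ≤ g s)
    (hgu : ∀ s ∈ Set.Icc (-(1/ε)) T, g s ≤ M)
    (hxc : ContinuousOn x (Set.Icc 0 T))
    (hode : ∀ s ∈ Set.Ioo (0:ℝ) T, HasDerivAt x (f s - g s * x s) s)
    (hx0 : x 0 = x0) :
    ∀ t ∈ Set.Icc (0:ℝ) T,
      |x t - f (t - 1 / g t) / g (t - 1 / g t)|
        ≤ 2 * (1 / ε - 1 / M) * sSup ((fun s => |f s|) '' Set.Icc (-(1/ε)) t)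
          + (1 / ε ^ 3) * sSup ((fun s => |f'' s|) '' Set.Icc (-(1/ε)) t)
          + (|x0|
              + (1 / ε) * sSup ((fun s => |f s|) '' Set.Icc (-(1/ε)) t)
              + (t / ε) * sSup ((fun s => |f' s|) '' Set.Icc (-(1/ε)) t)
              + (1 / (2 * ε)) * (1 / ε ^ 2 + t ^ 2)
                  * sSup ((fun s => |f'' s|) '' Set.Icc (-(1/ε)) t))
            * Real.exp (-ε * t) :=
  dqssa_error_estimate_general T ε M x0 hε f f' f'' g x hf' hf'' hf''c hg hgl hgu hxc hode hx0
end

section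
/- Let t > 0, let 0<ε≤M, let γ ∈ [ε,M], set τ = 1/γ, and let f be twice continuously differentiable on [-1/ε,t]. Then |∫₀ᵗ f(s)·exp(γ(s-t)) ds - f(t-τ)/γ| ≤ |[t·f'(t-τ) - f(t-τ)]·τ·exp(-γt)| + (τ³/2)·max_{s∈[-1/ε,t]}|f''(s)| + (1/2)·τ·(τ² + t²)·exp(-γt)·max_{s∈[-1/ε,t]}|f''(s)|. -/
/-! Expand `f` to first order about the node `a = t - 1/γ`. Against the kernel `exp (γ (s - t))` on
`[0, t]`, the constant and linear terms have moments `(1 - e^{-γt})/γ` and `t e^{-γt}/γ`, so they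
reproduce `f a / γ` up to the boundary term `(t f'(a) - f(a)) e^{-γt}/γ`. With `K = max |f''|` on `[-1/ε, t]`,
the Taylor remainder is at most `K (s - a)²/2`, whose integral against the kernel is
`K/2 · ((1/γ)³ - (1/γ)((1/γ)² + t²) e^{-γt})`. Since `γ ≥ ε`, the node lies in `[-1/ε, t]`. -/

open Real Set intervalIntegral MeasureTheory

theorem Convex.sub_sub_mul_eq_integral {S : Set ℝ} (hS : Convex ℝ S) {f f' f'' : ℝ → ℝ} {a b : ℝ}
    (hf' : ∀ x ∈ S, HasDerivAt f (f' x) x) (hf'' : ∀ x ∈ S, HasDerivAt f' (f'' x) x)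
    (hc : ContinuousOn f'' S) (ha : a ∈ S) (hb : b ∈ S) :
    f b - f a - f' a * (b - a) =
      (b - a) ^ 2 * ∫ θ in (0 : ℝ)..1, (1 - θ) * f'' (a + θ * (b - a)) := by
  have hmem : ∀ θ ∈ uIcc (0 : ℝ) 1, a + θ * (b - a) ∈ S := fun θ hθ =>
    hS.add_smul_sub_mem ha hb (by simpa using hθ)
  have hline : ∀ θ : ℝ, HasDerivAt (fun θ => a + θ * (b - a)) (b - a) θ := fun θ => by
    simpa using ((hasDerivAt_id θ).mul_const (b - a)).const_add a
  have hderiv : ∀ θ ∈ uIcc (0 : ℝ) 1,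
      HasDerivAt (fun θ => f (a + θ * (b - a)) + (1 - θ) * (b - a) * f' (a + θ * (b - a)))
        ((b - a) ^ 2 * ((1 - θ) * f'' (a + θ * (b - a)))) θ := by
    intro θ hθ
    have h₁ := (hf' _ (hmem θ hθ)).comp θ (hline θ)
    have h₂ := (hf'' _ (hmem θ hθ)).comp θ (hline θ)
    refine (h₁.add ((((hasDerivAt_id θ).const_sub 1).mul_const (b - a)).mul h₂)).congr_deriv ?_
    simp only [Function.comp_apply, id]
    ring
  have hint : IntervalIntegrable (fun θ => (1 - θ) * f'' (a + θ * (b - a))) volume 0 1 :=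
    ((continuousOn_const.sub continuousOn_id).mul
      (hc.comp (by fun_prop) hmem)).intervalIntegrable
  rw [← intervalIntegral.integral_const_mul,
    integral_eq_sub_of_hasDerivAt hderiv (hint.const_mul _)]
  simp only [one_mul, zero_mul, add_zero, sub_self, sub_zero, add_sub_cancel]
  ring

theorem Convex.abs_sub_sub_mul_le {S : Set ℝ} (hS : Convex ℝ S) {f f' f'' : ℝ → ℝ} {K a b : ℝ}
    (hf' : ∀ x ∈ S, HasDerivAt f (f' x) x) (hf'' : ∀ x ∈ S, HasDerivAt f' (f'' x) x)
    (hc : ContinuousOn f'' S) (hK : ∀ x ∈ S, |f'' x| ≤ K) (ha : a ∈ S) (hb : b ∈ S) :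
    |f b - f a - f' a * (b - a)| ≤ K / 2 * (b - a) ^ 2 := by
  have hbound : ‖∫ θ in (0 : ℝ)..1, (1 - θ) * f'' (a + θ * (b - a))‖ ≤
      ∫ θ in (0 : ℝ)..1, K * (1 - θ) := by
    refine norm_integral_le_of_norm_le zero_le_one (Filter.Eventually.of_forall fun θ hθ => ?_)
      ((continuous_const.mul (continuous_const.sub continuous_id)).intervalIntegrable _ _)
    rw [norm_mul, Real.norm_eq_abs, Real.norm_eq_abs, abs_of_nonneg (by linarith [hθ.2]), mul_comm]
    exact mul_le_mul_of_nonneg_right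
      (hK _ (hS.add_smul_sub_mem ha hb ⟨hθ.1.le, hθ.2⟩)) (by linarith [hθ.2])
  have hK_int : ∫ θ in (0 : ℝ)..1, K * (1 - θ) = K / 2 := by
    rw [intervalIntegral.integral_const_mul, intervalIntegral.integral_comp_sub_left (fun x => x)]
    norm_num
    ring
  rw [hS.sub_sub_mul_eq_integral hf' hf'' hc ha hb, abs_mul, abs_of_nonneg (sq_nonneg _), mul_comm]
  rw [hK_int, Real.norm_eq_abs] at hbound
  exact mul_le_mul_of_nonneg_right hbound (sq_nonneg _)

section ExpKernelMoments

variable {γ : ℝ} (t : ℝ)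

theorem hasDerivAt_exp_mul_sub (s : ℝ) :
    HasDerivAt (fun u => exp (γ * (u - t))) (exp (γ * (s - t)) * γ) s := by
  simpa using (((hasDerivAt_id' s).sub_const t).const_mul γ).exp

theorem integral_exp_mul_sub (hγ : γ ≠ 0) :
    ∫ s in (0 : ℝ)..t, exp (γ * (s - t)) = 1 / γ * (1 - exp (-γ * t)) := by
  have hderiv : ∀ s ∈ uIcc (0 : ℝ) t,
      HasDerivAt (fun u => 1 / γ * exp (γ * (u - t))) (exp (γ * (s - t))) s := fun s _ =>
    ((hasDerivAt_exp_mul_sub t s).const_mul _).congr_deriv (by field_simp)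
  rw [integral_eq_sub_of_hasDerivAt hderiv ((by fun_prop : Continuous _).intervalIntegrable _ _)]
  simp only [sub_self, mul_zero, exp_zero, zero_sub, mul_neg, neg_mul]
  ring

theorem integral_sub_mul_exp_mul_sub (hγ : γ ≠ 0) :
    ∫ s in (0 : ℝ)..t, (s - (t - 1 / γ)) * exp (γ * (s - t)) = t * (1 / γ) * exp (-γ * t) := by
  have hderiv : ∀ s ∈ uIcc (0 : ℝ) t,
      HasDerivAt (fun u => (u - t) / γ * exp (γ * (u - t)))
        ((s - (t - 1 / γ)) * exp (γ * (s - t))) s := fun s _ =>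
    ((((hasDerivAt_id' s).sub_const t).div_const γ).mul (hasDerivAt_exp_mul_sub t s)).congr_deriv
      (by field_simp; ring)
  rw [integral_eq_sub_of_hasDerivAt hderiv ((by fun_prop : Continuous _).intervalIntegrable _ _)]
  simp only [sub_self, mul_zero, exp_zero, zero_sub, mul_neg, neg_mul, zero_div, zero_mul]
  field_simp

theorem integral_sq_sub_mul_exp_mul_sub (hγ : γ ≠ 0) :
    ∫ s in (0 : ℝ)..t, (s - (t - 1 / γ)) ^ 2 * exp (γ * (s - t)) =
      (1 / γ) ^ 3 - 1 / γ * ((1 / γ) ^ 2 + t ^ 2) * exp (-γ * t) := by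
  have hderiv : ∀ s ∈ uIcc (0 : ℝ) t,
      HasDerivAt (fun u => ((u - t) ^ 2 / γ + 1 / γ ^ 3) * exp (γ * (u - t)))
        ((s - (t - 1 / γ)) ^ 2 * exp (γ * (s - t))) s := fun s _ =>
    (((((hasDerivAt_id' s).sub_const t).pow 2).div_const γ).add_const _ |>.mul
      (hasDerivAt_exp_mul_sub t s)).congr_deriv (by simp only [Pi.pow_apply]; field_simp; ring)
  rw [integral_eq_sub_of_hasDerivAt hderiv ((by fun_prop : Continuous _).intervalIntegrable _ _)]
  simp only [sub_self, mul_zero, exp_zero, zero_sub, mul_neg, neg_mul]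
  field_simp
  ring

end ExpKernelMoments

theorem integral_mul_exp_mul_sub_sub_div_eq {f : ℝ → ℝ} {γ t : ℝ} (y₀ y₁ : ℝ) (hγ : γ ≠ 0)
    (hf : IntervalIntegrable (fun s => f s * exp (γ * (s - t))) volume 0 t) :
    (∫ s in (0 : ℝ)..t, f s * exp (γ * (s - t))) - y₀ / γ =
      (t * y₁ - y₀) * (1 / γ) * exp (-γ * t) +
        ∫ s in (0 : ℝ)..t, (f s - y₀ - y₁ * (s - (t - 1 / γ))) * exp (γ * (s - t)) := by
  have hexp : IntervalIntegrable (fun s => exp (γ * (s - t))) volume 0 t :=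
    (by fun_prop : Continuous _).intervalIntegrable _ _
  have hlin : IntervalIntegrable (fun s => (s - (t - 1 / γ)) * exp (γ * (s - t))) volume 0 t :=
    (by fun_prop : Continuous _).intervalIntegrable _ _
  have hsplit : ∫ s in (0 : ℝ)..t, (f s - y₀ - y₁ * (s - (t - 1 / γ))) * exp (γ * (s - t)) =
      (∫ s in (0 : ℝ)..t, f s * exp (γ * (s - t))) - y₀ * (∫ s in (0 : ℝ)..t, exp (γ * (s - t)))
        - y₁ * ∫ s in (0 : ℝ)..t, (s - (t - 1 / γ)) * exp (γ * (s - t)) := by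
    rw [← intervalIntegral.integral_const_mul, ← intervalIntegral.integral_const_mul,
      ← intervalIntegral.integral_sub hf (hexp.const_mul y₀),
      ← intervalIntegral.integral_sub (hf.sub (hexp.const_mul y₀)) (hlin.const_mul y₁)]
    exact intervalIntegral.integral_congr fun s _ => by ring
  rw [hsplit, integral_exp_mul_sub t hγ, integral_sub_mul_exp_mul_sub t hγ]
  ring

theorem abs_integral_mul_exp_mul_sub_le {g : ℝ → ℝ} {γ t c C : ℝ} (ht : 0 ≤ t)
    (hg : ∀ s ∈ Icc 0 t, |g s| ≤ C * (s - c) ^ 2) :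
    |∫ s in (0 : ℝ)..t, g s * exp (γ * (s - t))| ≤
      C * ∫ s in (0 : ℝ)..t, (s - c) ^ 2 * exp (γ * (s - t)) := by
  rw [← intervalIntegral.integral_const_mul, ← Real.norm_eq_abs]
  refine norm_integral_le_of_norm_le ht (Filter.Eventually.of_forall fun s hs => ?_)
    ((by fun_prop : Continuous _).intervalIntegrable _ _)
  rw [norm_mul, Real.norm_eq_abs, Real.norm_of_nonneg (exp_pos _).le, ← mul_assoc]
  exact mul_le_mul_of_nonneg_right (hg s (Ioc_subset_Icc_self hs)) (exp_pos _).le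

theorem dqssa_quadrature_remainder_bound_general
    (t ε M γ : ℝ) (ht : 0 < t) (hε : 0 < ε)
    (hγ : γ ∈ Set.Icc ε M)
    (f f' f'' : ℝ → ℝ)
    (hf' : ∀ s ∈ Set.Icc (-(1/ε)) t, HasDerivAt f (f' s) s)
    (hf'' : ∀ s ∈ Set.Icc (-(1/ε)) t, HasDerivAt f' (f'' s) s)
    (hf''c : ContinuousOn f'' (Set.Icc (-(1/ε)) t)) :
    |(∫ s in (0:ℝ)..t, f s * Real.exp (γ * (s - t))) - f (t - 1/γ) / γ|
      ≤ |(t * f' (t - 1/γ) - f (t - 1/γ)) * (1/γ) * Real.exp (-γ * t)|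
        + ((1/γ)^3 / 2) * sSup ((fun s => |f'' s|) '' Set.Icc (-(1/ε)) t)
        + (1/2) * (1/γ) * ((1/γ)^2 + t^2) * Real.exp (-γ * t)
            * sSup ((fun s => |f'' s|) '' Set.Icc (-(1/ε)) t) := by
  set K := sSup ((fun s => |f'' s|) '' Set.Icc (-(1/ε)) t)
  have hγ₀ : 0 < γ := hε.trans_le hγ.1
  have hK : ∀ s ∈ Icc (-(1/ε)) t, |f'' s| ≤ K := fun s hs =>
    le_csSup (isCompact_Icc.bddAbove_image hf''c.abs) (mem_image_of_mem _ hs)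
  have hK₀ : 0 ≤ K := (abs_nonneg _).trans (hK t ⟨by linarith [one_div_pos.2 hε], le_rfl⟩)
  have hnode : t - 1 / γ ∈ Icc (-(1/ε)) t :=
    ⟨by linarith [one_div_le_one_div_of_le hε hγ.1], by linarith [one_div_pos.2 hγ₀]⟩
  have hsub : Icc 0 t ⊆ Icc (-(1/ε)) t := Icc_subset_Icc_left (by linarith [one_div_pos.2 hε])
  have hfc : ContinuousOn f (Icc 0 t) := fun s hs =>
    (hf' s (hsub hs)).continuousAt.continuousWithinAt
  have hremainder := abs_integral_mul_exp_mul_sub_le (γ := γ) ht.le fun s hs =>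
    (convex_Icc _ _).abs_sub_sub_mul_le hf' hf'' hf''c hK hnode (hsub hs)
  rw [integral_sq_sub_mul_exp_mul_sub t hγ₀.ne'] at hremainder
  rw [integral_mul_exp_mul_sub_sub_div_eq _ (f' (t - 1 / γ)) hγ₀.ne'
    ((hfc.mul (by fun_prop)).intervalIntegrable_of_Icc ht.le)]
  -- the bound of the statement simply drops the negative `e^{-γt}` part of the second moment
  have htail : 0 ≤ K * (1 / γ * ((1 / γ) ^ 2 + t ^ 2) * exp (-γ * t)) := by positivity
  refine (abs_add_le _ _).trans ?_
  linarith

/-- Quadrature remainder estimate in the D-QSSA analysis: for `γ ∈ [ε,M]`,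
`τ = 1/γ`, and `f ∈ C²([-1/ε,t])`,
`|∫₀ᵗ f(s)·exp(γ(s-t)) ds - f(t-τ)/γ|
  ≤ |[t·f'(t-τ) - f(t-τ)]·τ·exp(-γt)| + (τ³/2)·max|f''|
    + (1/2)·τ·(τ² + t²)·exp(-γt)·max|f''|`,
where the maxima of `|f''|` are taken over `[-1/ε,t]`. -/
theorem dqssa_quadrature_remainder_bound
    (t ε M γ : ℝ) (ht : 0 < t) (hε : 0 < ε) (hεM : ε ≤ M)
    (hγ : γ ∈ Set.Icc ε M)
    (f f' f'' : ℝ → ℝ)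
    (hf' : ∀ s ∈ Set.Icc (-(1/ε)) t, HasDerivAt f (f' s) s)
    (hf'' : ∀ s ∈ Set.Icc (-(1/ε)) t, HasDerivAt f' (f'' s) s)
    (hf''c : ContinuousOn f'' (Set.Icc (-(1/ε)) t)) :
    |(∫ s in (0:ℝ)..t, f s * Real.exp (γ * (s - t))) - f (t - 1/γ) / γ|
      ≤ |(t * f' (t - 1/γ) - f (t - 1/γ)) * (1/γ) * Real.exp (-γ * t)|
        + ((1/γ)^3 / 2) * sSup ((fun s => |f'' s|) '' Set.Icc (-(1/ε)) t)
        + (1/2) * (1/γ) * ((1/γ)^2 + t^2) * Real.exp (-γ * t)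
            * sSup ((fun s => |f'' s|) '' Set.Icc (-(1/ε)) t) :=
  dqssa_quadrature_remainder_bound_general t ε M γ ht hε hγ f f' f'' hf' hf'' hf''c
end

section
/- Let g > 0 be a constant, let f(s) = a + bs be a linear function on ℝ, and let t ≥ 0. Then ∫₀ᵗ f(s)·exp((s-t)g) ds = (1/g)·f(t - 1/g) - (1/g)·exp(-gt)·f(-1/g). In particular, the one-node quadrature rule ∫₀ᵗ f(s)exp((s-t)g) ds ≈ (1/g)·f(t - 1/g) with node t - 1/g and weight 1/g is exact for all linear functions f up to a term decaying exponentially in t. -/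
/-!
Since `(d/ds) exp((s-t)g) = g·exp((s-t)g)`, an antiderivative of `(a + b s)·exp((s-t)g)` is
`(1/g)·(a + b(s - 1/g))·exp((s-t)g)`: the shift of the node by `1/g` absorbs the term coming
from the derivative of `a + b s`. Evaluating it at `s = t` gives the quadrature rule, and at
`s = 0` the exponentially small correction.
-/

open Real

theorem hasDerivAt_affine_mul_exp (g a b t s : ℝ) (hg : g ≠ 0) :
    HasDerivAt (fun x => 1 / g * (a + b * (x - 1 / g)) * exp ((x - t) * g))
      ((a + b * s) * exp ((s - t) * g)) s := by
  have haffine : HasDerivAt (fun x => 1 / g * (a + b * (x - 1 / g))) (1 / g * b) s := by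
    simpa using ((((hasDerivAt_id s).sub_const (1 / g)).const_mul b).const_add a).const_mul (1 / g)
  have hexp : HasDerivAt (fun x => exp ((x - t) * g)) (exp ((s - t) * g) * g) s := by
    simpa using (((hasDerivAt_id s).sub_const t).mul_const g).exp
  refine (haffine.mul hexp).congr_deriv ?_
  field_simp
  ring

theorem integral_affine_mul_exp (g a b t u v : ℝ) (hg : g ≠ 0) :
    ∫ s in u..v, (a + b * s) * exp ((s - t) * g)
      = 1 / g * (a + b * (v - 1 / g)) * exp ((v - t) * g)
        - 1 / g * (a + b * (u - 1 / g)) * exp ((u - t) * g) :=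
  intervalIntegral.integral_eq_sub_of_hasDerivAt
    (fun s _ => hasDerivAt_affine_mul_exp g a b t s hg)
    ((by fun_prop : Continuous _).intervalIntegrable u v)

theorem dqssa_quadrature_exact_for_linear_general
    (g a b t : ℝ) (hg : 0 < g) :
    (∫ s in (0:ℝ)..t, (a + b * s) * Real.exp ((s - t) * g))
      = (1 / g) * (a + b * (t - 1 / g))
        - (1 / g) * Real.exp (-g * t) * (a + b * (-(1 / g))) := by
  rw [integral_affine_mul_exp g a b t 0 t hg.ne', sub_self, zero_mul, exp_zero,
    show (0 - t) * g = -g * t by ring]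
  ring

/-- The one-node quadrature rule with node `t - 1/g` and weight `1/g` is exact
for linear functions `f(s) = a + b·s` up to an exponentially decaying term:
`∫₀ᵗ f(s)·exp((s-t)g) ds = (1/g)·f(t - 1/g) - (1/g)·exp(-gt)·f(-1/g)`. -/
theorem dqssa_quadrature_exact_for_linear
    (g a b t : ℝ) (hg : 0 < g) (ht : 0 ≤ t) :
    (∫ s in (0:ℝ)..t, (a + b * s) * Real.exp ((s - t) * g))
      = (1 / g) * (a + b * (t - 1 / g))
        - (1 / g) * Real.exp (-g * t) * (a + b * (-(1 / g))) :=
  dqssa_quadrature_exact_for_linear_general g a b t hg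
end

section
/- Let g > 0 be a constant, let f(s) = a + bs be a linear function on ℝ, and let x ∈ C¹([0,∞)) solve dx/dt = f(t) - g·x(t) with x(0) = x⁰. Define x̃(t) = f(t - 1/g)/g. Then for all t ≥ 0, x(t) - x̃(t) = exp(-gt)·(x⁰ - f(-1/g)/g). In particular the D-QSSA approximation is asymptotically exact: the error decays to zero exponentially as t → ∞. -/
/-!
For affine `f` the delayed quasi-steady state `x̃(t) = f(t - 1/g)/g` is itself an exact solution
of `x' = f(t) - g x`: its derivative is `b/g`, and `f(t) - g x̃(t) = b/g` as well. Hence the error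
`x - x̃` solves `e' = -g e`, and multiplying by the integrating factor `exp (g t)` shows that
it equals `exp (-g t)` times its initial value.
-/

open Set Real

theorem eq_exp_mul_of_hasDerivAt_mul_self {e : ℝ → ℝ} {c t₀ : ℝ}
    (he : ∀ t ∈ Ici t₀, HasDerivAt e (c * e t) t) :
    ∀ t ∈ Ici t₀, e t = exp (c * (t - t₀)) * e t₀ := by
  have hu_deriv : ∀ s ∈ Ici t₀, HasDerivAt (fun s => exp (-c * (s - t₀)) * e s) 0 s := by
    intro s hs
    have hexp : HasDerivAt (fun s => exp (-c * (s - t₀))) (exp (-c * (s - t₀)) * -c) s := by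
      simpa using (((hasDerivAt_id s).sub_const t₀).const_mul (-c)).exp
    exact (hexp.mul (he s hs)).congr_deriv (by ring)
  intro t ht
  have hu_const : exp (-c * (t - t₀)) * e t = exp (-c * (t₀ - t₀)) * e t₀ :=
    constant_of_has_deriv_right_zero
      (fun s hs => (hu_deriv s hs.1).continuousAt.continuousWithinAt)
      (fun s hs => (hu_deriv s hs.1).hasDerivWithinAt) t ⟨ht, le_rfl⟩
  have hexp_mul : exp (c * (t - t₀)) * exp (-c * (t - t₀)) = 1 := by
    rw [← exp_add, ← add_mul, add_neg_cancel, zero_mul, exp_zero]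
  rw [sub_self, mul_zero, exp_zero, one_mul] at hu_const
  rw [← hu_const, ← mul_assoc, hexp_mul, one_mul]

theorem hasDerivAt_delayed_qssa_affine {g : ℝ} (hg : g ≠ 0) (a b t : ℝ) :
    HasDerivAt (fun s => (a + b * (s - 1 / g)) / g)
      ((a + b * t) - g * ((a + b * (t - 1 / g)) / g)) t :=
  ((((hasDerivAt_id t).sub_const (1 / g)).const_mul b).const_add a |>.div_const g).congr_deriv
    (by field_simp; ring)

theorem dqssa_constant_coefficient_linear_f_exact_error_general
    (g a b x0 : ℝ) (hg : 0 < g) (x : ℝ → ℝ)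
    (hode : ∀ t ∈ Set.Ici (0:ℝ), HasDerivAt x ((a + b * t) - g * x t) t)
    (hx0 : x 0 = x0) :
    ∀ t ∈ Set.Ici (0:ℝ),
      x t - (a + b * (t - 1 / g)) / g
        = Real.exp (-g * t) * (x0 - (a + b * (-(1 / g))) / g) := by
  have herror : ∀ t ∈ Ici (0 : ℝ), HasDerivAt (fun s => x s - (a + b * (s - 1 / g)) / g)
      (-g * (x t - (a + b * (t - 1 / g)) / g)) t := fun t ht =>
    ((hode t ht).sub (hasDerivAt_delayed_qssa_affine hg.ne' a b t)).congr_deriv (by ring)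
  intro t ht
  simpa [hx0] using eq_exp_mul_of_hasDerivAt_mul_self herror t ht

/-- For `dx/dt = f(t) - g·x(t)` with constant `g > 0` and linear `f(s) = a + b·s`,
the D-QSSA approximation `x̃(t) = f(t - 1/g)/g` satisfies
`x(t) - x̃(t) = exp(-gt)·(x⁰ - f(-1/g)/g)` for all `t ≥ 0`; in particular the error
decays to zero exponentially as `t → ∞`. -/
theorem dqssa_constant_coefficient_linear_f_exact_error
    (g a b x0 : ℝ) (hg : 0 < g) (x : ℝ → ℝ)
    (hxc : ContinuousOn x (Set.Ici (0:ℝ)))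
    (hode : ∀ t ∈ Set.Ici (0:ℝ), HasDerivAt x ((a + b * t) - g * x t) t)
    (hx0 : x 0 = x0) :
    ∀ t ∈ Set.Ici (0:ℝ),
      x t - (a + b * (t - 1 / g)) / g
        = Real.exp (-g * t) * (x0 - (a + b * (-(1 / g))) / g) :=
  dqssa_constant_coefficient_linear_f_exact_error_general g a b x0 hg x hode hx0
end

section
/- Let τ > 0, let f : ℝ → ℝ and h : ℝ×ℝ → ℝ, and let y₀ : ℝ → ℝ be differentiable with y₀'(t) = h(x₀(t), y₀(t)), where x₀(t) = τ·f(y₀(t)) is the standard quasi-steady state approximation. Assume f is differentiable and that the function w(t) = f'(y₀(t))·h(x₀(t), y₀(t)) is differentiable. Define the first-order correction x̂(t) = x₀(t) - τ²·f'(y₀(t))·h(x₀(t), y₀(t)). Then x̂ satisfies the first equation of the fast-slow system exactly up to a remainder quadratic in τ: for all t, d x̂/dt(t) = f(y₀(t)) - (1/τ)·x̂(t) - τ²·w'(t). -/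
/-! Since `d/dt f(y₀(t)) = f'(y₀(t))·y₀'(t) = w(t)`, differentiating `x̂ = τ·f(y₀) - τ²·w` gives
`τ·w - τ²·w'`, and `τ·w = f(y₀) - (1/τ)·x̂` is an algebraic identity once `τ ≠ 0`. -/

theorem hasDerivAt_mul_sub_sq_mul {𝕜 : Type*} [NontriviallyNormedField 𝕜]
    {F W : 𝕜 → 𝕜} {w' τ t : 𝕜} (hτ : τ ≠ 0) (hF : HasDerivAt F (W t) t)
    (hW : HasDerivAt W w' t) :
    HasDerivAt (fun s => τ * F s - τ ^ 2 * W s)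
      (F t - (1 / τ) * (τ * F t - τ ^ 2 * W t) - τ ^ 2 * w') t := by
  refine ((hF.const_mul τ).sub (hW.const_mul (τ ^ 2))).congr_deriv ?_
  field_simp
  ring

/-- The first-order correction `x̂(t) = x₀(t) - τ²·f'(y₀(t))·h(x₀(t), y₀(t))` of the
standard QSSA `x₀(t) = τ·f(y₀(t))`, where `dy₀/dt = h(x₀(t), y₀(t))`, satisfies the
fast equation `dx/dt = f(y) - (1/τ)x` of the fast-slow system up to a remainder
quadratic in `τ`: `d x̂/dt(t) = f(y₀(t)) - (1/τ)·x̂(t) - τ²·w'(t)`, where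
`w(t) = f'(y₀(t))·h(x₀(t), y₀(t))`. -/
theorem dqssa_first_order_correction_satisfies_fast_equation
    (τ : ℝ) (hτ : 0 < τ) (f f' : ℝ → ℝ) (h : ℝ → ℝ → ℝ) (y₀ w' : ℝ → ℝ)
    (hf : ∀ y, HasDerivAt f (f' y) y)
    (hy₀ : ∀ t, HasDerivAt y₀ (h (τ * f (y₀ t)) (y₀ t)) t)
    (hw : ∀ t, HasDerivAt (fun s => f' (y₀ s) * h (τ * f (y₀ s)) (y₀ s)) (w' t) t) :
    ∀ t, HasDerivAt
      (fun s => τ * f (y₀ s) - τ ^ 2 * (f' (y₀ s) * h (τ * f (y₀ s)) (y₀ s)))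
      (f (y₀ t)
        - (1 / τ) * (τ * f (y₀ t) - τ ^ 2 * (f' (y₀ t) * h (τ * f (y₀ t)) (y₀ t)))
        - τ ^ 2 * w' t) t := fun t =>
  hasDerivAt_mul_sub_sq_mul hτ.ne' ((hf (y₀ t)).comp t (hy₀ t)) (hw t)
end

section
/- Let τ > 0, let f : ℝ → ℝ, h : ℝ×ℝ → ℝ, let ỹ : ℝ → ℝ be twice differentiable with ỹ'(t) = h(x̃(t), ỹ(t)) where x̃(t) = τ·f(ỹ(t-τ)) is the D-QSSA approximation, and assume the composition f∘ỹ is twice differentiable. Then the D-QSSA approximation coincides with the first-order correction up to terms cubic in τ: for all t, |x̃(t) - [τ·f(ỹ(t)) - τ²·f'(ỹ(t))·h(x̃(t), ỹ(t))]| ≤ (τ³/2)·sup_{s∈[t-τ,t]} |(f∘ỹ)''(s)|, provided (f∘ỹ)'' is bounded on [t-τ,t]. -/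
/-- The D-QSSA approximation `x̃(t) = τ·f(y(t-τ))`, where `dy/dt = h(x̃(t), y(t))`,
coincides with the first-order correction `τ·f(y(t)) - τ²·f'(y(t))·h(x̃(t), y(t))`
up to terms cubic in `τ`:
`|x̃(t) - [τ·f(y(t)) - τ²·f'(y(t))·h(x̃(t), y(t))]| ≤ (τ³/2)·sup_{[t-τ,t]}|(f∘y)''|`,
provided `(f∘y)''` is bounded on `[t-τ,t]`. Here `F'` and `F''` denote the first and
second derivatives of the composition `f∘y`. -/
theorem dqssa_equals_first_order_correction_up_to_cubic
    (τ : ℝ) (hτ : 0 < τ) (f f' : ℝ → ℝ) (h : ℝ → ℝ → ℝ) (y F' F'' : ℝ → ℝ)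
    (hf : ∀ z, HasDerivAt f (f' z) z)
    (hy : ∀ s, HasDerivAt y (h (τ * f (y (s - τ))) (y s)) s)
    (hF' : ∀ s, HasDerivAt (fun u => f (y u)) (F' s) s)
    (hF'' : ∀ s, HasDerivAt F' (F'' s) s)
    (t : ℝ)
    (hbdd : BddAbove ((fun s => |F'' s|) '' Set.Icc (t - τ) t)) :
    |τ * f (y (t - τ))
        - (τ * f (y t) - τ ^ 2 * (f' (y t) * h (τ * f (y (t - τ))) (y t)))|
      ≤ (τ ^ 3 / 2) * sSup ((fun s => |F'' s|) '' Set.Icc (t - τ) t) := by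
  set a := t - τ with ha
  set M := sSup ((fun s => |F'' s|) '' Set.Icc a t) with hM
  set F : ℝ → ℝ := fun u => f (y u) with hF
  -- identify F' t with the chain-rule derivative
  have hchain : F' t = f' (y t) * h (τ * f (y (t - τ))) (y t) := by
    have h1 : HasDerivAt F (f' (y t) * h (τ * f (y (t - τ))) (y t)) t :=
      (hf (y t)).comp t (hy t)
    exact (hF' t).unique h1
  -- bounds on |F''| on the interval
  have htmem : t ∈ Set.Icc a t := by constructor <;> simp [ha]; linarith
  have hMle : ∀ s ∈ Set.Icc a t, |F'' s| ≤ M :=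
    fun s hs => le_csSup hbdd ⟨s, hs, rfl⟩
  have hM0 : 0 ≤ M := le_trans (abs_nonneg _) (hMle t htmem)
  -- the auxiliary function ψ
  set ψ : ℝ → ℝ := fun s => F a - F s + (s - a) * F' s with hψ
  have hψ' : ∀ s, HasDerivAt ψ ((s - a) * F'' s) s := by
    intro s
    have : HasDerivAt ψ (0 - F' s + ((1 - 0) * F' s + (s - a) * F'' s)) s := by
      exact ((hasDerivAt_const s (F a)).sub (hF' s)).add
        (((hasDerivAt_id s).sub (hasDerivAt_const s a)).mul (hF'' s))
    simpa using this
  set B : ℝ → ℝ := fun s => M * (s - a) ^ 2 / 2 with hB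
  have hB' : ∀ s, HasDerivAt B (M * (s - a)) s := by
    intro s
    have h1 : HasDerivAt B ((0 * (id s - a) ^ 2 + M * (2 * (id s - a) ^ (2 - 1) * (1 - 0))) / 2) s :=
      (((hasDerivAt_const s M).mul
        (((hasDerivAt_id s).sub (hasDerivAt_const s a)).pow 2)).div_const 2)
    convert h1 using 1
    simp; ring
  have key : ∀ x ∈ Set.Icc a t, ‖ψ x‖ ≤ B x := by
    have hψa : ‖ψ a‖ ≤ B a := by simp [hψ, hB]
    apply image_norm_le_of_norm_deriv_right_le_deriv_boundary
      (f' := fun s => (s - a) * F'' s) (B' := fun s => M * (s - a))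
      (fun s _ => (hψ' s).continuousAt.continuousWithinAt)
      (fun s _ => (hψ' s).hasDerivWithinAt) hψa hB'
    · intro x hx
      have hx' : x ∈ Set.Icc a t := Set.mem_of_mem_of_subset hx Set.Ico_subset_Icc_self
      have h1 : 0 ≤ x - a := by linarith [hx.1]
      calc ‖(x - a) * F'' x‖ = (x - a) * |F'' x| := by
            rw [Real.norm_eq_abs, abs_mul, abs_of_nonneg h1]
        _ ≤ (x - a) * M := mul_le_mul_of_nonneg_left (hMle x hx') h1
        _ = M * (x - a) := mul_comm _ _
  have hkeyt := key t htmem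
  have hta : t - a = τ := by simp [ha]
  rw [Real.norm_eq_abs] at hkeyt
  have hψt : ψ t = F a - F t + τ * F' t := by simp [hψ, hta]
  have hBt : B t = M * τ ^ 2 / 2 := by simp [hB, hta]
  rw [hψt, hBt] at hkeyt
  have hgoal : τ * f (y (t - τ))
        - (τ * f (y t) - τ ^ 2 * (f' (y t) * h (τ * f (y (t - τ))) (y t)))
      = τ * (F a - F t + τ * F' t) := by
    rw [← hchain]; simp [hF, ha]; ring
  rw [hgoal, abs_mul, abs_of_pos hτ]
  calc τ * |F a - F t + τ * F' t| ≤ τ * (M * τ ^ 2 / 2) :=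
        mul_le_mul_of_nonneg_left hkeyt hτ.le
    _ = τ ^ 3 / 2 * M := by ring
end
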